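/- Let (vᵢ)_{i ∈ ℤ} be a bi-infinite path in the Farey graph 𝓕 (so vᵢ is adjacent to vᵢ₊₁ and vᵢ₋₁ ≠ vᵢ₊₁ for all i). Suppose that for every i ∈ ℤ, the distance between vᵢ₋₁ and vᵢ₊₁ in the induced subgraph of 𝓕 on the neighborhood of vᵢ is at least 3. Then (vᵢ) is a geodesic: for all i, j ∈ ℤ, the distance in 𝓕 between vᵢ and vⱼ equals |i − j|. -/

import Mathlib

/-- Primitive vectors in `ℤ²`. -/
def PrimVec : Type := {v : Fin 2 → ℤ // IsCoprime (v 0) (v 1)}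

/-- Identify a primitive vector with its negation. -/
def fareySetoid : Setoid PrimVec where
  r v w := v.1 = w.1 ∨ v.1 = -w.1
  iseqv := by
    refine ⟨fun v => Or.inl rfl, ?_, ?_⟩
    · rintro v w (h | h)
      · exact Or.inl h.symm
      · exact Or.inr (by rw [h, neg_neg])
    · rintro u v w (h1 | h1) (h2 | h2)
      · exact Or.inl (h1.trans h2)
      · exact Or.inr (by rw [h1, h2])
      · exact Or.inr (by rw [h1, h2])
      · exact Or.inl (by rw [h1, h2, neg_neg])

/-- Vertices of the Farey graph: primitive vectors of `ℤ²` modulo negation. -/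
def FareyVertex : Type := Quotient fareySetoid

def fareyDet (v w : Fin 2 → ℤ) : ℤ := v 0 * w 1 - v 1 * w 0

lemma fareyDet_neg_left (v w : Fin 2 → ℤ) : fareyDet (-v) w = -fareyDet v w := by
  simp [fareyDet]; ring

lemma fareyDet_neg_right (v w : Fin 2 → ℤ) : fareyDet v (-w) = -fareyDet v w := by
  simp [fareyDet]; ring

/-- The Farey graph. -/
def Farey : SimpleGraph FareyVertex where
  Adj := Quotient.lift₂
    (fun v w : PrimVec => fareyDet v.1 w.1 = 1 ∨ fareyDet v.1 w.1 = -1)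
    (by
      rintro a b a' b' (h1 | h1) (h2 | h2) <;>
        simp only [eq_iff_iff] <;>
        rw [h1, h2] <;>
        simp only [fareyDet_neg_left, fareyDet_neg_right, neg_neg] <;>
        omega)
  symm := by
    constructor
    intro a b
    refine Quotient.inductionOn₂ a b ?_
    intro v w h
    have hd : fareyDet w.1 v.1 = -fareyDet v.1 w.1 := by simp [fareyDet]; ring
    show fareyDet w.1 v.1 = 1 ∨ fareyDet w.1 v.1 = -1
    rcases h with h | h <;> omega
  loopless := by
    constructor
    intro a
    refine Quotient.inductionOn a ?_
    intro v h
    have hd : fareyDet v.1 v.1 = 0 := by simp [fareyDet]; ring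
    rcases (h : fareyDet v.1 v.1 = 1 ∨ fareyDet v.1 v.1 = -1) with h | h <;> omega

/-- The Farey vertex of a primitive vector. -/
def fv (v : Fin 2 → ℤ) (h : IsCoprime (v 0) (v 1)) : FareyVertex :=
  Quotient.mk fareySetoid ⟨v, h⟩

/-!
Lift the path to vectors `w i` with `det (w i) (w (i + 1)) = 1`. Then
`w (i + 1) = a i • w i - w (i - 1)` with `a i = det (w (i - 1)) (w (i + 1))`, and `|a i|` is the
distance of `w (i - 1)` and `w (i + 1)` in the link of `w i`, so the hypothesis says `|a i| ≥ 3`.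

At every `w k` take the Farey edge `{w k, y k}`, where `y k` is the neighbour of `w (k - 1)` in the
link of `w k` on the side of `w (k + 1)`. Adjacent vertices never lie strictly on opposite sides of
a Farey edge. Since `|a i| ≥ 3`, the recurrence puts every `w j` with `j > k` strictly beyond the
edge `k`, while both ends of the edge `k - 1` lie strictly before it. Hence a walk from `w i` to
`w j` meets the edges `i + 1, …, j` at strictly increasing times, so it has length at least
`j - i`.
-/

open SimpleGraph

lemma SimpleGraph.Walk.exists_walk_from_zero {V : Type*} {G : SimpleGraph V} {f : V → ℤ}
    (hf : ∀ x y, G.Adj x y → f x < 0 → f y ≤ 0) {x y : V} (p : G.Walk x y) (hx : f x < 0)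
    (hy : 0 ≤ f y) : ∃ z, f z = 0 ∧ ∃ q : G.Walk z y, q.length < p.length := by
  induction p with
  | nil => omega
  | @cons x x' y hxx' p ih =>
    rcases (hf x x' hxx' hx).lt_or_eq with hx' | hx'
    · obtain ⟨z, hz, q, hq⟩ := ih hx' hy
      exact ⟨z, hz, q, by simp; omega⟩
    · exact ⟨x', hx', p, by simp⟩

lemma SimpleGraph.exists_walk_length_eq_of_adj_succ {V : Type*} {G : SimpleGraph V} {v : ℤ → V}
    (hadj : ∀ i, G.Adj (v i) (v (i + 1))) (i : ℤ) (n : ℕ) :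
    ∃ p : G.Walk (v i) (v (i + n)), p.length = n := by
  induction n with
  | zero => exact ⟨Walk.nil.copy rfl (by simp), by simp⟩
  | succ n ih =>
    obtain ⟨p, hp⟩ := ih
    exact ⟨(p.concat (hadj (i + n))).copy rfl (by push_cast; ring_nf), by simp [hp]⟩

lemma SimpleGraph.dist_eq_length_of_forall_le_length {V : Type*} {G : SimpleGraph V} {u v : V}
    (p : G.Walk u v) (h : ∀ q : G.Walk u v, p.length ≤ q.length) : G.dist u v = p.length := by
  obtain ⟨q, hq⟩ := p.reachable.exists_walk_length_eq_dist
  exact le_antisymm (dist_le p) (hq ▸ h q)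

lemma SimpleGraph.dist_induce_le_two {V : Type*} {G : SimpleGraph V} {s : Set V} {x y z : V}
    (hx : x ∈ s) (hy : y ∈ s) (hz : z ∈ s) (hxz : G.Adj x z) (hzy : G.Adj z y) :
    (G.induce s).dist ⟨x, hx⟩ ⟨y, hy⟩ ≤ 2 :=
  dist_le (.cons (show (G.induce s).Adj ⟨x, hx⟩ ⟨z, hz⟩ from hxz)
    (.cons (show (G.induce s).Adj ⟨z, hz⟩ ⟨y, hy⟩ from hzy) .nil))

lemma Int.sign_mul_sign_le_one (a b : ℤ) : a.sign * b.sign ≤ 1 := by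
  rcases Int.sign_trichotomy a with ha | ha | ha <;>
    rcases Int.sign_trichotomy b with hb | hb | hb <;> simp [ha, hb]

lemma Int.exists_forall_succ_eq_mul {G : Type*} [Group G] (δ : ℤ → G) :
    ∃ E : ℤ → G, ∀ i, E (i + 1) = E i * δ i := by
  let E : ℤ → G := fun i => Int.inductionOn' (motive := fun _ => G) i 0 1
    (fun k _ g => g * δ k) (fun k _ g => g * (δ (k - 1))⁻¹)
  refine ⟨E, fun i => ?_⟩
  rcases le_or_gt 0 i with hi | hi
  · exact Int.inductionOn'_add_one hi
  · have h := Int.inductionOn'_sub_one (motive := fun _ => G) (z := i + 1) (b := 0) (zero := 1)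
      (succ := fun k _ g => g * δ k) (pred := fun k _ g => g * (δ (k - 1))⁻¹) (by omega)
    simp only [add_sub_cancel_right] at h
    change E i = E (i + 1) * (δ i)⁻¹ at h
    rw [h, inv_mul_cancel_right]

section Recurrence

variable {a g h : ℤ → ℤ} {k : ℤ}

lemma abs_lt_abs_succ_of_recurrence (ha : ∀ j, 2 ≤ |a j|)
    (hg : ∀ j, g (j + 1) = a j * g j - g (j - 1)) (hk : |g k| < |g (k + 1)|) :
    ∀ j, k ≤ j → |g j| < |g (j + 1)| := by
  intro j hj
  induction j, hj using Int.leInduction with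
  | base => exact hk
  | succ j _ ih =>
    have hstep : |a (j + 1)| * |g (j + 1)| - |g j| ≤ |g (j + 1 + 1)| := by
      rw [hg (j + 1), add_sub_cancel_right, ← abs_mul]
      exact abs_sub_abs_le_abs_sub _ _
    nlinarith [ha (j + 1), abs_nonneg (g j)]

/-- Past `k`, the term `a j * g j` dominates the recurrence, so `g (j + 1)` has its sign. -/
lemma mul_pos_of_recurrence (ha : ∀ j, 2 ≤ |a j|)
    (hg : ∀ j, g (j + 1) = a j * g j - g (j - 1))
    (hk : |g k| < |g (k + 1)|) {j : ℤ} (hj : k < j) : 0 < g (j + 1) * (a j * g j) := by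
  have hlt : |g (j - 1)| < |a j * g j| := by
    have := abs_lt_abs_succ_of_recurrence ha hg hk (j - 1) (by omega)
    rw [sub_add_cancel] at this
    rw [abs_mul]
    nlinarith [ha j, abs_nonneg (g j)]
  rw [hg]
  nlinarith [abs_mul_abs_self (a j * g j), abs_mul_abs_self (g (j - 1)),
    le_abs_self (g (j - 1) * (a j * g j)), abs_mul (g (j - 1)) (a j * g j), abs_nonneg (g (j - 1))]

/-- Two solutions of the same recurrence flip sign simultaneously, so their product keeps its
sign. -/
lemma mul_pos_of_recurrence_of_recurrence (ha : ∀ j, 2 ≤ |a j|)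
    (hg : ∀ j, g (j + 1) = a j * g j - g (j - 1)) (hh : ∀ j, h (j + 1) = a j * h j - h (j - 1))
    (hgk : |g k| < |g (k + 1)|) (hhk : |h k| < |h (k + 1)|) (hpos : 0 < g (k + 1) * h (k + 1)) :
    ∀ j, k + 1 ≤ j → 0 < g j * h j := by
  intro j hj
  induction j, hj using Int.leInduction with
  | base => exact hpos
  | succ j hj ih =>
    have hprod := mul_pos (mul_pos_of_recurrence ha hg hgk (by omega : k < j))
      (mul_pos_of_recurrence ha hh hhk (by omega : k < j))
    have hsq : 0 < a j * a j * (g j * h j) :=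
      mul_pos (mul_self_pos.mpr (abs_pos.mp (by linarith [ha j]))) ih
    have hrw : g (j + 1) * (a j * g j) * (h (j + 1) * (a j * h j))
        = g (j + 1) * h (j + 1) * (a j * a j * (g j * h j)) := by ring
    exact pos_of_mul_pos_left (hrw ▸ hprod) hsq.le

end Recurrence

@[simp]
lemma fareyDet_self (u : Fin 2 → ℤ) : fareyDet u u = 0 := by
  simp only [fareyDet]; ring

lemma fareyDet_comm (u v : Fin 2 → ℤ) : fareyDet v u = -fareyDet u v := by
  simp only [fareyDet]; ring

@[simp]
lemma fareyDet_sub_left (u v x : Fin 2 → ℤ) :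
    fareyDet (u - v) x = fareyDet u x - fareyDet v x := by
  simp only [fareyDet, Pi.sub_apply]; ring

@[simp]
lemma fareyDet_sub_right (x u v : Fin 2 → ℤ) :
    fareyDet x (u - v) = fareyDet x u - fareyDet x v := by
  simp only [fareyDet, Pi.sub_apply]; ring

@[simp]
lemma fareyDet_smul_left (c : ℤ) (u x : Fin 2 → ℤ) :
    fareyDet (c • u) x = c * fareyDet u x := by
  simp only [fareyDet, Pi.smul_apply, smul_eq_mul]; ring

@[simp]
lemma fareyDet_smul_right (c : ℤ) (x u : Fin 2 → ℤ) :
    fareyDet x (c • u) = c * fareyDet x u := by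
  simp only [fareyDet, Pi.smul_apply, smul_eq_mul]; ring

lemma isCoprime_left_of_fareyDet_eq_one {u v : Fin 2 → ℤ} (h : fareyDet u v = 1) :
    IsCoprime (u 0) (u 1) :=
  ⟨v 1, -v 0, by rw [← h, fareyDet]; ring⟩

lemma isCoprime_right_of_fareyDet_eq_one {u v : Fin 2 → ℤ} (h : fareyDet u v = 1) :
    IsCoprime (v 0) (v 1) :=
  ⟨-u 1, u 0, by rw [← h, fareyDet]; ring⟩

lemma eq_or_eq_neg_of_fareyDet_eq_zero {u v : Fin 2 → ℤ} (hu : IsCoprime (u 0) (u 1))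
    (hv : IsCoprime (v 0) (v 1)) (h : fareyDet u v = 0) : v = u ∨ v = -u := by
  obtain ⟨a, b, hab⟩ := hu
  obtain ⟨a', b', hab'⟩ := hv
  simp only [fareyDet] at h
  set c := a * v 0 + b * v 1
  have hv0 : v 0 = c * u 0 := by linear_combination (-v 0) * hab - b * h
  have hv1 : v 1 = c * u 1 := by linear_combination (-v 1) * hab + a * h
  have hc : c * (a' * u 0 + b' * u 1) = 1 := by
    linear_combination hab' - a' * hv0 - b' * hv1
  rcases Int.eq_one_or_neg_one_of_mul_eq_one hc with hc1 | hc1 <;>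
    [left; right] <;> funext j <;> fin_cases j <;> simp [hv0, hv1, hc1]

lemma eq_fareyDet_smul_sub {p c q : Fin 2 → ℤ} (hpc : fareyDet p c = 1)
    (hcq : fareyDet c q = 1) :
    q = fareyDet p q • c - p := by
  simp only [fareyDet] at hpc hcq
  funext j
  fin_cases j <;> simp [fareyDet]
  · linear_combination (-q 0) * hpc - p 0 * hcq
  · linear_combination (-q 1) * hpc - p 1 * hcq

lemma farey_adj_fv_iff {u v : Fin 2 → ℤ} (hu : IsCoprime (u 0) (u 1))
    (hv : IsCoprime (v 0) (v 1)) :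
    Farey.Adj (fv u hu) (fv v hv) ↔ fareyDet u v = 1 ∨ fareyDet u v = -1 := Iff.rfl

lemma exists_fareyDet_eq_one_lift (v : ℤ → FareyVertex)
    (hadj : ∀ i, Farey.Adj (v i) (v (i + 1))) :
    ∃ (w : ℤ → Fin 2 → ℤ) (hw : ∀ i, fareyDet (w i) (w (i + 1)) = 1),
      v = fun i => fv (w i) (isCoprime_left_of_fareyDet_eq_one (hw i)) := by
  have hunit (i : ℤ) : IsUnit (fareyDet (v i).out.1 (v (i + 1)).out.1) := by
    have h := hadj i
    rw [← Quotient.out_eq (v i), ← Quotient.out_eq (v (i + 1))] at h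
    exact Int.isUnit_iff.mpr h
  obtain ⟨E, hE⟩ := Int.exists_forall_succ_eq_mul fun i => (hunit i).unit
  have hw (i : ℤ) :
      fareyDet ((E i : ℤ) • (v i).out.1) ((E (i + 1) : ℤ) • (v (i + 1)).out.1) = 1 := by
    rw [fareyDet_smul_left, fareyDet_smul_right, hE, Units.val_mul, IsUnit.unit_spec]
    rcases Int.units_eq_one_or (E i) with h | h <;>
      rcases Int.isUnit_iff.mp (hunit i) with h' | h' <;> simp [h, h']
  refine ⟨fun i => (E i : ℤ) • (v i).out.1, hw, funext fun i => ?_⟩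
  conv_lhs => rw [← Quotient.out_eq (v i)]
  refine Quotient.sound ?_
  show _ ∨ _
  rcases Int.units_eq_one_or (E i) with h | h <;> simp [h]

/-- The sign of `fareySide e f` tells on which side of the Farey edge `{e, f}` a vector lies;
on primitive vectors it vanishes exactly at `±e` and `±f`. -/
def fareySide (e f u : Fin 2 → ℤ) : ℤ := fareyDet e u * fareyDet u f

lemma fareySide_neg (e f u : Fin 2 → ℤ) : fareySide e f (-u) = fareySide e f u := by
  simp only [fareySide, fareyDet, Pi.neg_apply]; ring

/-- Adjacent vertices never lie strictly on opposite sides of a Farey edge: `det(e, f) det(u, u')`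
is a difference of two integers whose product is `fareySide e f u * fareySide e f u'`. -/
lemma two_le_abs_fareyDet_mul_of_fareySide_mul_neg {e f u u' : Fin 2 → ℤ}
    (h : fareySide e f u * fareySide e f u' < 0) : 2 ≤ |fareyDet e f * fareyDet u u'| := by
  set A := fareyDet u f * fareyDet e u'
  set B := fareyDet e u * fareyDet u' f
  have hdet : fareyDet e f * fareyDet u u' = A - B := by simp only [A, B, fareyDet]; ring
  have hAB : A * B < 0 := by
    convert h using 1
    simp only [A, B, fareySide]; ring
  rw [hdet, le_abs]
  rcases mul_neg_iff.mp hAB with ⟨hA, hB⟩ | ⟨hA, hB⟩ <;> omega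

def fareySideV (e f : Fin 2 → ℤ) : FareyVertex → ℤ :=
  Quotient.lift (fun u : PrimVec => fareySide e f u.1) (by
    rintro u u' (h | h)
    · simp only [h]
    · simp only [h, fareySide_neg])

@[simp]
lemma fareySideV_fv (e f u : Fin 2 → ℤ) (hu : IsCoprime (u 0) (u 1)) :
    fareySideV e f (fv u hu) = fareySide e f u := rfl

lemma fareySideV_nonpos_of_adj {e f : Fin 2 → ℤ} (hef : fareyDet e f = 1 ∨ fareyDet e f = -1)
    {x y : FareyVertex} (hxy : Farey.Adj x y) (hx : fareySideV e f x < 0) :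
    fareySideV e f y ≤ 0 := by
  induction x, y using Quotient.inductionOn₂ with
  | h u u' =>
    by_contra! hy
    have hcross := two_le_abs_fareyDet_mul_of_fareySide_mul_neg (mul_neg_of_neg_of_pos hx hy)
    rcases hef with h | h <;> rcases (farey_adj_fv_iff u.2 u'.2).mp hxy with h' | h' <;>
      simp [h, h'] at hcross

/-- For `|det(p, q)| < 3`, `p` and `q` coincide, are adjacent, or have the common neighbour
`e • c - p` (with `det(p, q) = 2 e`) in the link of `c`. -/
lemma three_le_abs_fareyDet {p c q : Fin 2 → ℤ} (hpc : fareyDet p c = 1)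
    (hcq : fareyDet c q = 1)
    (hne : fv p (isCoprime_left_of_fareyDet_eq_one hpc) ≠
      fv q (isCoprime_right_of_fareyDet_eq_one hcq))
    (hlink : ∀ h₁ h₂, 3 ≤ (Farey.induce (Farey.neighborSet
      (fv c (isCoprime_right_of_fareyDet_eq_one hpc)))).dist
        ⟨fv p (isCoprime_left_of_fareyDet_eq_one hpc), h₁⟩
        ⟨fv q (isCoprime_right_of_fareyDet_eq_one hcq), h₂⟩) :
    3 ≤ |fareyDet p q| := by
  have hp := isCoprime_left_of_fareyDet_eq_one hpc
  have hq := isCoprime_right_of_fareyDet_eq_one hcq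
  have hc := isCoprime_right_of_fareyDet_eq_one hpc
  have hpmem : fv p hp ∈ Farey.neighborSet (fv c hc) := Or.inr (by rw [fareyDet_comm, hpc])
  have hqmem : fv q hq ∈ Farey.neighborSet (fv c hc) := Or.inl hcq
  have hlink := hlink hpmem hqmem
  have hqeq := eq_fareyDet_smul_sub hpc hcq
  have hcommon : ∀ e : ℤ, (e = 1 ∨ e = -1) → fareyDet p q = 2 * e → False := by
    intro e he hd
    set z := e • c - p
    have hcz : fareyDet c z = 1 := by
      simp only [z, fareyDet_sub_right, fareyDet_smul_right, fareyDet_self, fareyDet_comm p c, hpc]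
      ring
    have hz := isCoprime_right_of_fareyDet_eq_one hcz
    have hpz : fareyDet p z = e := by
      simp only [z, fareyDet_sub_right, fareyDet_smul_right, fareyDet_self, hpc]
      ring
    have hzq : fareyDet z q = -e := by
      rw [hqeq, hd]
      simp only [z, fareyDet_sub_right, fareyDet_sub_left, fareyDet_smul_right, fareyDet_smul_left,
        fareyDet_self, fareyDet_comm p c, hpc]
      ring
    have := dist_induce_le_two hpmem hqmem (Or.inl hcz : fv z hz ∈ _)
      ((farey_adj_fv_iff hp hz).mpr (by omega)) ((farey_adj_fv_iff hz hq).mpr (by omega))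
    omega
  by_contra! hlt
  rcases (by rw [abs_lt] at hlt; omega : fareyDet p q = 0 ∨ (fareyDet p q = 1 ∨
    fareyDet p q = -1) ∨ fareyDet p q = 2 * 1 ∨ fareyDet p q = 2 * -1) with h | h | h | h
  · refine hne (Quotient.sound ?_)
    rcases eq_or_eq_neg_of_fareyDet_eq_zero hp hq h with h | h
    · exact Or.inl h.symm
    · exact Or.inr (neg_eq_iff_eq_neg.mp h.symm)
  · have hadj : (Farey.induce _).Adj ⟨_, hpmem⟩ ⟨_, hqmem⟩ :=
      (farey_adj_fv_iff hp hq).mpr h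
    rw [dist_eq_one_iff_adj.mpr hadj] at hlink
    omega
  · exact hcommon 1 (by norm_num) h
  · exact hcommon (-1) (by norm_num) h

section Chain

variable {w : ℤ → Fin 2 → ℤ}

def turn (w : ℤ → Fin 2 → ℤ) (i : ℤ) : ℤ := fareyDet (w (i - 1)) (w (i + 1))

/-- `{w i, separator w i}` is the Farey edge separating `w (i - 1)` from `w (i + 1)`:
`separator w i` is the neighbour of `w (i - 1)` in the link of `w i`, on the side of `w (i + 1)`. -/
def separator (w : ℤ → Fin 2 → ℤ) (i : ℤ) : Fin 2 → ℤ :=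
  w i - (turn w i).sign • w (i - 1)

lemma fareyDet_pred_self (hw : ∀ i, fareyDet (w i) (w (i + 1)) = 1) (i : ℤ) :
    fareyDet (w (i - 1)) (w i) = 1 := by
  simpa using hw (i - 1)

lemma fareyDet_self_pred (hw : ∀ i, fareyDet (w i) (w (i + 1)) = 1) (i : ℤ) :
    fareyDet (w i) (w (i - 1)) = -1 := by
  rw [fareyDet_comm, fareyDet_pred_self hw]

lemma fareyDet_succ_self (hw : ∀ i, fareyDet (w i) (w (i + 1)) = 1) (i : ℤ) :
    fareyDet (w (i + 1)) (w i) = -1 := by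
  rw [fareyDet_comm, hw]

lemma succ_eq_turn_smul_sub (hw : ∀ i, fareyDet (w i) (w (i + 1)) = 1) (i : ℤ) :
    w (i + 1) = turn w i • w i - w (i - 1) :=
  eq_fareyDet_smul_sub (fareyDet_pred_self hw i) (hw i)

lemma fareyDet_separator (hw : ∀ i, fareyDet (w i) (w (i + 1)) = 1) (k : ℤ) :
    fareyDet (w k) (separator w k) = (turn w k).sign := by
  simp only [separator, fareyDet_sub_right, fareyDet_smul_right, fareyDet_self,
    fareyDet_self_pred hw]
  ring

lemma isCoprime_separator (hw : ∀ i, fareyDet (w i) (w (i + 1)) = 1) (k : ℤ) :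
    IsCoprime (separator w k 0) (separator w k 1) :=
  isCoprime_right_of_fareyDet_eq_one (u := w (k - 1)) (by
    simp only [separator, fareyDet_sub_right, fareyDet_smul_right, fareyDet_self,
      fareyDet_pred_self hw]
    ring)

lemma fareyDet_succ_separator (hw : ∀ i, fareyDet (w i) (w (i + 1)) = 1) (k : ℤ) :
    fareyDet (w (k + 1)) (separator w k) = |turn w k| - 1 := by
  rw [← Int.sign_mul_self_eq_abs]
  simp only [separator, fareyDet_sub_right, fareyDet_smul_right, fareyDet_succ_self hw k]
  conv_lhs => rw [succ_eq_turn_smul_sub hw k]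
  simp only [fareyDet_sub_left, fareyDet_smul_left, fareyDet_self, fareyDet_self_pred hw k]
  ring

lemma fareySide_succ_self (hw : ∀ i, fareyDet (w i) (w (i + 1)) = 1) (k : ℤ) :
    fareySide (w (k + 1)) (separator w (k + 1)) (w k) = -1 := by
  simp only [fareySide, separator, fareyDet_sub_right, fareyDet_smul_right, fareyDet_self,
    fareyDet_succ_self hw, add_sub_cancel_right, hw k]
  ring

lemma fareySide_succ_separator_neg (hw : ∀ i, fareyDet (w i) (w (i + 1)) = 1)
    (ha : ∀ i, 3 ≤ |turn w i|) (k : ℤ) :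
    fareySide (w (k + 1)) (separator w (k + 1)) (separator w k) < 0 := by
  have hsep : fareyDet (separator w k) (separator w (k + 1)) =
      1 - |turn w k| + (turn w k).sign * (turn w (k + 1)).sign := by
    rw [separator.eq_1 w (k + 1), fareyDet_sub_right, fareyDet_smul_right, add_sub_cancel_right,
      fareyDet_comm (w (k + 1)), fareyDet_comm (w k), fareyDet_succ_separator hw k,
      fareyDet_separator hw k]
    ring
  rw [fareySide, fareyDet_succ_separator hw k, hsep]
  nlinarith [ha k, Int.sign_mul_sign_le_one (turn w k) (turn w (k + 1))]

lemma turn_ne_zero (ha : ∀ i, 3 ≤ |turn w i|) (k : ℤ) : turn w k ≠ 0 := by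
  intro h
  simpa [h] using ha k

lemma fareySide_separator_pos (hw : ∀ i, fareyDet (w i) (w (i + 1)) = 1)
    (ha : ∀ i, 3 ≤ |turn w i|) {k j : ℤ} (hkj : k < j) :
    0 < fareySide (w k) (separator w k) (w j) := by
  have ha2 : ∀ i, 2 ≤ |turn w i| := fun i => (ha i).trans' (by norm_num)
  have hrec (x : Fin 2 → ℤ) (i : ℤ) :
      fareyDet x (w (i + 1)) = turn w i * fareyDet x (w i) - fareyDet x (w (i - 1)) ∧
      fareyDet (w (i + 1)) x = turn w i * fareyDet (w i) x - fareyDet (w (i - 1)) x := by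
    rw [succ_eq_turn_smul_sub hw i]
    simp only [fareyDet_sub_left, fareyDet_sub_right, fareyDet_smul_left, fareyDet_smul_right,
      and_self]
  have hg : |fareyDet (w k) (w k)| < |fareyDet (w k) (w (k + 1))| := by simp [hw k]
  have hh : |fareyDet (w k) (separator w k)| < |fareyDet (w (k + 1)) (separator w k)| := by
    rw [fareyDet_separator hw, fareyDet_succ_separator hw,
      Int.abs_sign_of_ne_zero (turn_ne_zero ha k),
      abs_of_pos (a := |turn w k| - 1) (by linarith [ha k])]
    linarith [ha k]
  have hpos : 0 < fareyDet (w k) (w (k + 1)) * fareyDet (w (k + 1)) (separator w k) := by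
    rw [hw k, fareyDet_succ_separator hw k]
    linarith [ha k]
  exact mul_pos_of_recurrence_of_recurrence (g := fun i => fareyDet (w k) (w i))
    (h := fun i => fareyDet (w i) (separator w k)) ha2 (fun i => (hrec (w k) i).1)
    (fun i => (hrec (separator w k) i).2) hg hh hpos j (by omega)

lemma fareySide_separator_nonneg (hw : ∀ i, fareyDet (w i) (w (i + 1)) = 1)
    (ha : ∀ i, 3 ≤ |turn w i|) {k j : ℤ} (hkj : k ≤ j) :
    0 ≤ fareySide (w k) (separator w k) (w j) := by
  rcases hkj.lt_or_eq with hkj | rfl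
  · exact (fareySide_separator_pos hw ha hkj).le
  · simp [fareySide]

lemma fareySide_succ_neg_of_fareySide_eq_zero (hw : ∀ i, fareyDet (w i) (w (i + 1)) = 1)
    (ha : ∀ i, 3 ≤ |turn w i|) {k : ℤ} {u : Fin 2 → ℤ} (hu : IsCoprime (u 0) (u 1))
    (h : fareySide (w k) (separator w k) u = 0) :
    fareySide (w (k + 1)) (separator w (k + 1)) u < 0 := by
  rcases mul_eq_zero.mp h with h | h
  · rcases eq_or_eq_neg_of_fareyDet_eq_zero (isCoprime_left_of_fareyDet_eq_one (hw k)) hu h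
      with rfl | rfl <;>
    simp only [fareySide_neg, fareySide_succ_self hw k, Int.reduceNeg, neg_lt_zero, zero_lt_one]
  · rcases eq_or_eq_neg_of_fareyDet_eq_zero hu (isCoprime_separator hw k) h with h | h
    · rw [← h]
      exact fareySide_succ_separator_neg hw ha k
    · rw [← neg_neg u, ← h, fareySide_neg]
      exact fareySide_succ_separator_neg hw ha k

lemma fareySideV_nonpos_of_adj_separator (hw : ∀ i, fareyDet (w i) (w (i + 1)) = 1)
    (ha : ∀ i, 3 ≤ |turn w i|) (k : ℤ) {x y : FareyVertex} (hxy : Farey.Adj x y)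
    (hx : fareySideV (w k) (separator w k) x < 0) : fareySideV (w k) (separator w k) y ≤ 0 := by
  refine fareySideV_nonpos_of_adj ?_ hxy hx
  rw [fareyDet_separator hw]
  rcases Int.sign_trichotomy (turn w k) with h | h | h
  · exact Or.inl h
  · exact absurd (Int.sign_eq_zero_iff_zero.mp h) (turn_ne_zero ha k)
  · exact Or.inr h

/-- Every walk from a vertex of the edge `{w k, separator w k}` to `w n` must cross the
separating edges `k + 1, …, n` one after the other. -/
lemma sub_le_length_of_fareySideV_eq_zero (hw : ∀ i, fareyDet (w i) (w (i + 1)) = 1)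
    (ha : ∀ i, 3 ≤ |turn w i|) {k n : ℤ} (hkn : k ≤ n) {z : FareyVertex}
    (hz : fareySideV (w k) (separator w k) z = 0)
    (p : Farey.Walk z (fv (w n) (isCoprime_left_of_fareyDet_eq_one (hw n)))) :
    n - k ≤ p.length := by
  induction k, hkn using Int.leInductionDown generalizing z with
  | base => omega
  | pred k hkn ih =>
    have hz' : fareySideV (w k) (separator w k) z < 0 := by
      induction z using Quotient.inductionOn with
      | h u =>
        have := fareySide_succ_neg_of_fareySide_eq_zero (k := k - 1) hw ha u.2 hz
        rwa [sub_add_cancel] at this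
    obtain ⟨z', hz'0, q, hq⟩ := p.exists_walk_from_zero
      (fun _ _ => fareySideV_nonpos_of_adj_separator hw ha k) hz'
      (fareySide_separator_nonneg hw ha hkn)
    have := ih hz'0 q
    omega

end Chain

theorem farey_geodesic_of_turning_ge_three (v : ℤ → FareyVertex)
    (hadj : ∀ i : ℤ, Farey.Adj (v i) (v (i + 1)))
    (hne : ∀ i : ℤ, v (i - 1) ≠ v (i + 1))
    (hturn : ∀ i : ℤ, ∀ h₁ : v (i - 1) ∈ Farey.neighborSet (v i),
      ∀ h₂ : v (i + 1) ∈ Farey.neighborSet (v i),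
      3 ≤ (Farey.induce (Farey.neighborSet (v i))).dist ⟨v (i - 1), h₁⟩ ⟨v (i + 1), h₂⟩) :
    ∀ i j : ℤ, Farey.dist (v i) (v j) = (i - j).natAbs := by
  obtain ⟨w, hw, rfl⟩ := exists_fareyDet_eq_one_lift v hadj
  have ha (i : ℤ) : 3 ≤ |turn w i| :=
    three_le_abs_fareyDet (fareyDet_pred_self hw i) (hw i) (hne i) (hturn i)
  intro i j
  wlog hij : i ≤ j generalizing i j
  · rw [dist_comm, this j i (by omega)]
    omega
  obtain ⟨n, rfl⟩ := Int.le.dest hij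
  obtain ⟨p, hp⟩ := exists_walk_length_eq_of_adj_succ hadj i n
  rw [dist_eq_length_of_forall_le_length p fun q => ?_, hp]
  · omega
  · have := sub_le_length_of_fareySideV_eq_zero hw ha hij (by simp [fareySide]) q
    omega
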